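/- arXiv:2507.00104 — 7 statements merged into one kernel-verified Lean document; each statement's English description precedes it below -/
import Mathlib

section
/- For all real numbers x, y, δ, t with 0 ≤ |δ| ≤ x and 0 ≤ t ≤ y, one has sinh(x)·sinh(y) ≥ min( sinh(x+δ)·sinh(y−t), sinh(x−δ)·sinh(y+t) ). -/
theorem sinh_min_ineq (x y δ t : ℝ) (hδ : |δ| ≤ x) (ht0 : 0 ≤ t) (hty : t ≤ y) :
    min (Real.sinh (x + δ) * Real.sinh (y - t)) (Real.sinh (x - δ) * Real.sinh (y + t))
      ≤ Real.sinh x * Real.sinh y := by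
  obtain ⟨h1, h2⟩ := abs_le.mp hδ
  have hx : 0 ≤ x := le_trans (abs_nonneg δ) hδ
  have hy : 0 ≤ y := le_trans ht0 hty
  have s1 : 0 ≤ Real.sinh (x + δ) := Real.sinh_nonneg_iff.mpr (by linarith)
  have s2 : 0 ≤ Real.sinh (x - δ) := Real.sinh_nonneg_iff.mpr (by linarith)
  have s3 : 0 ≤ Real.sinh (y - t) := Real.sinh_nonneg_iff.mpr (by linarith)
  have s4 : 0 ≤ Real.sinh (y + t) := Real.sinh_nonneg_iff.mpr (by linarith)
  have sx : 0 ≤ Real.sinh x := Real.sinh_nonneg_iff.mpr hx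
  have sy : 0 ≤ Real.sinh y := Real.sinh_nonneg_iff.mpr hy
  have hprod1 : Real.sinh (x + δ) * Real.sinh (x - δ) ≤ Real.sinh x ^ 2 := by
    rw [Real.sinh_add, Real.sinh_sub]
    have cδ := Real.cosh_sq δ
    have cx := Real.cosh_sq x
    nlinarith [sq_nonneg (Real.sinh δ)]
  have hprod2 : Real.sinh (y - t) * Real.sinh (y + t) ≤ Real.sinh y ^ 2 := by
    rw [Real.sinh_add, Real.sinh_sub]
    have ct := Real.cosh_sq t
    have cy := Real.cosh_sq y
    nlinarith [sq_nonneg (Real.sinh t)]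
  set a := Real.sinh (x + δ) * Real.sinh (y - t) with ha
  set b := Real.sinh (x - δ) * Real.sinh (y + t) with hb
  have hab : a * b ≤ (Real.sinh x * Real.sinh y) ^ 2 := by
    have : a * b = (Real.sinh (x + δ) * Real.sinh (x - δ)) *
        (Real.sinh (y - t) * Real.sinh (y + t)) := by ring
    rw [this]
    calc (Real.sinh (x + δ) * Real.sinh (x - δ)) * (Real.sinh (y - t) * Real.sinh (y + t))
        ≤ Real.sinh x ^ 2 * (Real.sinh (y - t) * Real.sinh (y + t)) := by
          apply mul_le_mul_of_nonneg_right hprod1 (mul_nonneg s3 s4)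
      _ ≤ Real.sinh x ^ 2 * Real.sinh y ^ 2 := by
          apply mul_le_mul_of_nonneg_left hprod2 (sq_nonneg _)
      _ = (Real.sinh x * Real.sinh y) ^ 2 := by ring
  by_contra h
  push_neg at h
  have hmin : 0 ≤ min a b := le_min (mul_nonneg s1 s3) (mul_nonneg s2 s4)
  have hma : min a b ≤ a := min_le_left _ _
  have hmb : min a b ≤ b := min_le_right _ _
  nlinarith [mul_nonneg sx sy]
end

section
/- For all real numbers x, y, δ, t with 0 < |δ| ≤ x and 0 < t ≤ y, the inequality sinh(x)·sinh(y) > min( sinh(x+δ)·sinh(y−t), sinh(x−δ)·sinh(y+t) ) is strict. -/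
theorem sinh_min_ineq_strict (x y δ t : ℝ) (hδ0 : 0 < |δ|) (hδ : |δ| ≤ x)
    (ht0 : 0 < t) (hty : t ≤ y) :
    min (Real.sinh (x + δ) * Real.sinh (y - t)) (Real.sinh (x - δ) * Real.sinh (y + t))
      < Real.sinh x * Real.sinh y := by
  have hx0 : 0 < x := lt_of_lt_of_le hδ0 hδ
  have hy0 : 0 < y := lt_of_lt_of_le ht0 hty
  have hsx : 0 < Real.sinh x := Real.sinh_pos_iff.mpr hx0
  have hsy : 0 < Real.sinh y := Real.sinh_pos_iff.mpr hy0
  have hst : 0 < Real.sinh t := Real.sinh_pos_iff.mpr ht0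
  have hsty : Real.sinh t ≤ Real.sinh y := Real.sinh_le_sinh.mpr hty
  have hδne : δ ≠ 0 := by
    intro h; rw [h, abs_zero] at hδ0; exact lt_irrefl 0 hδ0
  have hsδ : Real.sinh δ ≠ 0 := fun h => hδne (Real.sinh_eq_zero.mp h)
  have hsδ2 : 0 < Real.sinh δ ^ 2 :=
    lt_of_le_of_ne (sq_nonneg _) (Ne.symm (pow_ne_zero 2 hsδ))
  -- product identities
  have hidx : Real.sinh (x + δ) * Real.sinh (x - δ)
      = Real.sinh x ^ 2 - Real.sinh δ ^ 2 := by
    rw [Real.sinh_add, Real.sinh_sub]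
    have h1 := Real.cosh_sq δ
    have h2 := Real.cosh_sq x
    ring_nf
    nlinarith [h1, h2]
  have hidy : Real.sinh (y + t) * Real.sinh (y - t)
      = Real.sinh y ^ 2 - Real.sinh t ^ 2 := by
    rw [Real.sinh_add, Real.sinh_sub]
    have h1 := Real.cosh_sq t
    have h2 := Real.cosh_sq y
    ring_nf
    nlinarith [h1, h2]
  -- product of the two candidates is strictly below (sinh x * sinh y)^2
  have hprod : (Real.sinh (x + δ) * Real.sinh (y - t)) *
      (Real.sinh (x - δ) * Real.sinh (y + t))
      < (Real.sinh x * Real.sinh y) ^ 2 := by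
    have : (Real.sinh (x + δ) * Real.sinh (y - t)) *
        (Real.sinh (x - δ) * Real.sinh (y + t))
        = (Real.sinh x ^ 2 - Real.sinh δ ^ 2) * (Real.sinh y ^ 2 - Real.sinh t ^ 2) := by
      calc (Real.sinh (x + δ) * Real.sinh (y - t)) *
            (Real.sinh (x - δ) * Real.sinh (y + t))
          = (Real.sinh (x + δ) * Real.sinh (x - δ)) *
            (Real.sinh (y + t) * Real.sinh (y - t)) := by ring
        _ = _ := by rw [hidx, hidy]
    rw [this]
    have h1 : Real.sinh t ^ 2 ≤ Real.sinh y ^ 2 := pow_le_pow_left₀ hst.le hsty 2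
    nlinarith [mul_nonneg hsδ2.le (sub_nonneg.mpr h1),
      mul_pos (mul_pos hst hst) (mul_pos hsx hsx)]
  by_contra h
  push_neg at h
  have ha : Real.sinh x * Real.sinh y ≤ Real.sinh (x + δ) * Real.sinh (y - t) :=
    le_trans h (min_le_left _ _)
  have hb : Real.sinh x * Real.sinh y ≤ Real.sinh (x - δ) * Real.sinh (y + t) :=
    le_trans h (min_le_right _ _)
  have hP : 0 < Real.sinh x * Real.sinh y := mul_pos hsx hsy
  nlinarith [mul_le_mul ha hb hP.le (le_trans hP.le ha)]
end

section
/- For all nonnegative real numbers u₁, u₂, v₁, v₂, one has sinh((u₁+u₂)/2)·sinh((v₁+v₂)/2) ≥ min( sinh(u₁)·sinh(v₁), sinh(u₂)·sinh(v₂) ). -/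
lemma sinh_mul_le_sq (x y : ℝ) :
    Real.sinh x * Real.sinh y ≤ Real.sinh ((x + y) / 2) ^ 2 := by
  have hx : (x + y) / 2 + (x - y) / 2 = x := by ring
  have hy : (x + y) / 2 - (x - y) / 2 = y := by ring
  have e1 := Real.sinh_add ((x + y) / 2) ((x - y) / 2)
  have e2 := Real.sinh_sub ((x + y) / 2) ((x - y) / 2)
  rw [hx] at e1
  rw [hy] at e2
  have key : Real.sinh x * Real.sinh y =
      Real.sinh ((x + y) / 2) ^ 2 * Real.cosh ((x - y) / 2) ^ 2 -
        Real.cosh ((x + y) / 2) ^ 2 * Real.sinh ((x - y) / 2) ^ 2 := by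
    rw [e1, e2]; ring
  rw [Real.cosh_sq ((x - y) / 2), Real.cosh_sq ((x + y) / 2)] at key
  nlinarith [sq_nonneg (Real.sinh ((x - y) / 2))]

theorem sinh_avg_min (u₁ u₂ v₁ v₂ : ℝ) (hu₁ : 0 ≤ u₁) (hu₂ : 0 ≤ u₂)
    (hv₁ : 0 ≤ v₁) (hv₂ : 0 ≤ v₂) :
    min (Real.sinh u₁ * Real.sinh v₁) (Real.sinh u₂ * Real.sinh v₂)
      ≤ Real.sinh ((u₁ + u₂) / 2) * Real.sinh ((v₁ + v₂) / 2) := by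
  have s1 := Real.sinh_nonneg_iff.2 hu₁
  have s2 := Real.sinh_nonneg_iff.2 hu₂
  have s3 := Real.sinh_nonneg_iff.2 hv₁
  have s4 := Real.sinh_nonneg_iff.2 hv₂
  have hP : 0 ≤ Real.sinh ((u₁ + u₂) / 2) := Real.sinh_nonneg_iff.2 (by linarith)
  have hQ : 0 ≤ Real.sinh ((v₁ + v₂) / 2) := Real.sinh_nonneg_iff.2 (by linarith)
  have hu := sinh_mul_le_sq u₁ u₂
  have hv := sinh_mul_le_sq v₁ v₂
  set a := Real.sinh u₁ * Real.sinh v₁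
  set b := Real.sinh u₂ * Real.sinh v₂
  have hm1 : min a b ≤ a := min_le_left _ _
  have hm2 : min a b ≤ b := min_le_right _ _
  have hm0 : 0 ≤ min a b := le_min (mul_nonneg s1 s3) (mul_nonneg s2 s4)
  have hab : min a b * min a b ≤ a * b :=
    mul_le_mul hm1 hm2 hm0 (mul_nonneg s1 s3)
  have key : a * b ≤ (Real.sinh ((u₁ + u₂) / 2) * Real.sinh ((v₁ + v₂) / 2)) ^ 2 := by
    have : a * b = (Real.sinh u₁ * Real.sinh u₂) * (Real.sinh v₁ * Real.sinh v₂) := by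
      simp only [a, b]; ring
    rw [this]
    calc Real.sinh u₁ * Real.sinh u₂ * (Real.sinh v₁ * Real.sinh v₂)
        ≤ Real.sinh ((u₁ + u₂) / 2) ^ 2 * Real.sinh ((v₁ + v₂) / 2) ^ 2 := by
          apply mul_le_mul hu hv (mul_nonneg s3 s4) (sq_nonneg _)
      _ = (Real.sinh ((u₁ + u₂) / 2) * Real.sinh ((v₁ + v₂) / 2)) ^ 2 := by ring
  nlinarith [mul_nonneg hP hQ]
end

section
/- For nonnegative real numbers u₁, u₂, v₁, v₂, equality sinh((u₁+u₂)/2)·sinh((v₁+v₂)/2) = min( sinh(u₁)·sinh(v₁), sinh(u₂)·sinh(v₂) ) holds if and only if one of the following cases holds: u₁ = u₂ = 0; or v₁ = v₂ = 0; or (u₁ = u₂ and v₁ = v₂). -/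
lemma sinh_avg_sq_sub (a b : ℝ) :
    Real.sinh ((a + b) / 2) ^ 2 - Real.sinh a * Real.sinh b
      = (Real.cosh (a - b) - 1) / 2 := by
  have h1 := Real.cosh_add a b
  have h2 := Real.cosh_sub a b
  have h3 := Real.cosh_two_mul ((a + b) / 2)
  have h4 := Real.cosh_sq ((a + b) / 2)
  have he : 2 * ((a + b) / 2) = a + b := by ring
  rw [he] at h3
  linarith

theorem sinh_avg_min_eq_iff (u₁ u₂ v₁ v₂ : ℝ) (hu₁ : 0 ≤ u₁) (hu₂ : 0 ≤ u₂)
    (hv₁ : 0 ≤ v₁) (hv₂ : 0 ≤ v₂) :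
    Real.sinh ((u₁ + u₂) / 2) * Real.sinh ((v₁ + v₂) / 2)
        = min (Real.sinh u₁ * Real.sinh v₁) (Real.sinh u₂ * Real.sinh v₂)
      ↔ (u₁ = 0 ∧ u₂ = 0) ∨ (v₁ = 0 ∧ v₂ = 0) ∨ (u₁ = u₂ ∧ v₁ = v₂) := by
  constructor
  · intro h
    have hA : 0 ≤ Real.sinh u₁ := Real.sinh_nonneg_iff.2 hu₁
    have hB : 0 ≤ Real.sinh u₂ := Real.sinh_nonneg_iff.2 hu₂
    have hC : 0 ≤ Real.sinh v₁ := Real.sinh_nonneg_iff.2 hv₁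
    have hD : 0 ≤ Real.sinh v₂ := Real.sinh_nonneg_iff.2 hv₂
    have hP₁0 : 0 ≤ Real.sinh u₁ * Real.sinh v₁ := mul_nonneg hA hC
    have hP₂0 : 0 ≤ Real.sinh u₂ * Real.sinh v₂ := mul_nonneg hB hD
    rcases eq_or_lt_of_le (le_min hP₁0 hP₂0) with hm0 | hmpos
    · -- min = 0 case
      have hL0 : Real.sinh ((u₁ + u₂) / 2) * Real.sinh ((v₁ + v₂) / 2) = 0 := by
        rw [h, ← hm0]
      rcases mul_eq_zero.1 hL0 with h0 | h0
      · left
        have : (u₁ + u₂) / 2 = 0 := Real.sinh_eq_zero.1 h0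
        constructor <;> linarith
      · right; left
        have : (v₁ + v₂) / 2 = 0 := Real.sinh_eq_zero.1 h0
        constructor <;> linarith
    · -- min > 0 case
      have hP₁p : 0 < Real.sinh u₁ * Real.sinh v₁ := lt_of_lt_of_le hmpos (min_le_left _ _)
      have hP₂p : 0 < Real.sinh u₂ * Real.sinh v₂ := lt_of_lt_of_le hmpos (min_le_right _ _)
      have hAp : 0 < Real.sinh u₁ := by nlinarith
      have hBp : 0 < Real.sinh u₂ := by nlinarith
      have hCp : 0 < Real.sinh v₁ := by nlinarith
      have hDp : 0 < Real.sinh v₂ := by nlinarith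
      have hku := sinh_avg_sq_sub u₁ u₂
      have hkv := sinh_avg_sq_sub v₁ v₂
      have hcu : 1 ≤ Real.cosh (u₁ - u₂) := Real.one_le_cosh _
      have hcv : 1 ≤ Real.cosh (v₁ - v₂) := Real.one_le_cosh _
      have hkuge : Real.sinh u₁ * Real.sinh u₂ ≤ Real.sinh ((u₁ + u₂) / 2) ^ 2 := by
        linarith
      have hkvge : Real.sinh v₁ * Real.sinh v₂ ≤ Real.sinh ((v₁ + v₂) / 2) ^ 2 := by
        linarith
      have hABp : 0 < Real.sinh u₁ * Real.sinh u₂ := mul_pos hAp hBp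
      have hCDp : 0 < Real.sinh v₁ * Real.sinh v₂ := mul_pos hCp hDp
      have hXp : 0 < Real.sinh ((u₁ + u₂) / 2) ^ 2 := lt_of_lt_of_le hABp hkuge
      have hYp : 0 < Real.sinh ((v₁ + v₂) / 2) ^ 2 := lt_of_lt_of_le hCDp hkvge
      have hL1 : Real.sinh ((u₁ + u₂) / 2) * Real.sinh ((v₁ + v₂) / 2)
          ≤ Real.sinh u₁ * Real.sinh v₁ := by rw [h]; exact min_le_left _ _
      have hL2 : Real.sinh ((u₁ + u₂) / 2) * Real.sinh ((v₁ + v₂) / 2)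
          ≤ Real.sinh u₂ * Real.sinh v₂ := by rw [h]; exact min_le_right _ _
      have hLpos : 0 < Real.sinh ((u₁ + u₂) / 2) * Real.sinh ((v₁ + v₂) / 2) := by
        rw [h]; exact hmpos
      -- X*Y = L^2 ≤ P₁ P₂ = (AB)(CD), and AB ≤ X, CD ≤ Y, so X = AB, Y = CD
      have hXYle : Real.sinh ((u₁ + u₂) / 2) ^ 2 * Real.sinh ((v₁ + v₂) / 2) ^ 2
          ≤ (Real.sinh u₁ * Real.sinh u₂) * (Real.sinh v₁ * Real.sinh v₂) := by
        nlinarith [mul_le_mul hL1 hL2 hLpos.le hP₁0]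
      have hXeq : Real.sinh ((u₁ + u₂) / 2) ^ 2 = Real.sinh u₁ * Real.sinh u₂ := by
        refine le_antisymm ?_ hkuge
        have h1 : Real.sinh ((u₁ + u₂) / 2) ^ 2 * Real.sinh ((v₁ + v₂) / 2) ^ 2
            ≤ (Real.sinh u₁ * Real.sinh u₂) * Real.sinh ((v₁ + v₂) / 2) ^ 2 :=
          le_trans hXYle (mul_le_mul_of_nonneg_left hkvge hABp.le)
        exact le_of_mul_le_mul_right h1 hYp
      have hYeq : Real.sinh ((v₁ + v₂) / 2) ^ 2 = Real.sinh v₁ * Real.sinh v₂ := by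
        refine le_antisymm ?_ hkvge
        have h1 : Real.sinh ((u₁ + u₂) / 2) ^ 2 * Real.sinh ((v₁ + v₂) / 2) ^ 2
            ≤ Real.sinh ((u₁ + u₂) / 2) ^ 2 * (Real.sinh v₁ * Real.sinh v₂) := by
          calc Real.sinh ((u₁ + u₂) / 2) ^ 2 * Real.sinh ((v₁ + v₂) / 2) ^ 2
              ≤ (Real.sinh u₁ * Real.sinh u₂) * (Real.sinh v₁ * Real.sinh v₂) := hXYle
            _ ≤ Real.sinh ((u₁ + u₂) / 2) ^ 2 * (Real.sinh v₁ * Real.sinh v₂) :=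
                mul_le_mul_of_nonneg_right hkuge hCDp.le
        exact le_of_mul_le_mul_left h1 hXp
      have hu : u₁ = u₂ := by
        have h1 : Real.cosh (u₁ - u₂) = 1 := by linarith
        have h2 : u₁ - u₂ = 0 := by
          by_contra hne
          exact absurd h1 (ne_of_gt (Real.one_lt_cosh.2 hne))
        linarith
      have hv : v₁ = v₂ := by
        have h1 : Real.cosh (v₁ - v₂) = 1 := by linarith
        have h2 : v₁ - v₂ = 0 := by
          by_contra hne
          exact absurd h1 (ne_of_gt (Real.one_lt_cosh.2 hne))
        linarith
      exact Or.inr (Or.inr ⟨hu, hv⟩)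
  · rintro (⟨h1, h2⟩ | ⟨h1, h2⟩ | ⟨h1, h2⟩) <;> subst h1 <;> subst h2 <;>
      simp [min_self]
end

section
/- Let a₀, b₀, c₀ be positive reals and ζ ∈ [0, π/2). There exists a constant C, depending only on a₀, b₀, c₀, such that for every triangle in the hyperbolic plane (curvature −1) with side lengths a ≤ a₀, b ≤ b₀, c ≥ c₀ and angle γ opposite side c satisfying γ ≤ π/2 + ζ, one has c − a ≤ C·(b·sin(ζ) + b²). -/
open Real

lemma sinh_le_mul_exp {x : ℝ} (hx : 0 ≤ x) : Real.sinh x ≤ x * Real.exp x := by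
  rw [Real.sinh_eq]
  have h1 : 1 - x ≤ Real.exp (-x) := by linarith [Real.add_one_le_exp (-x)]
  have h2 : (1 : ℝ) ≤ Real.exp x := Real.one_le_exp hx
  have h3 : Real.exp x * Real.exp (-x) = 1 := by
    rw [← Real.exp_add]; simp
  have h4 : Real.exp x * (1 - x) ≤ Real.exp x * Real.exp (-x) :=
    mul_le_mul_of_nonneg_left h1 (Real.exp_pos x).le
  have h5 : 0 ≤ x * (Real.exp x - 1) :=
    mul_nonneg hx (by linarith)
  nlinarith

lemma cosh_sub_cosh' (x y : ℝ) :
    Real.cosh x - Real.cosh y =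
      2 * Real.sinh ((x + y) / 2) * Real.sinh ((x - y) / 2) := by
  have hx : Real.cosh x = Real.cosh ((x + y) / 2 + (x - y) / 2) := by congr 1; ring
  have hy : Real.cosh y = Real.cosh ((x + y) / 2 - (x - y) / 2) := by congr 1; ring
  rw [hx, hy, Real.cosh_add, Real.cosh_sub]
  ring

set_option maxHeartbeats 1000000 in
theorem hyperbolic_triangle_comparison_bound (a₀ b₀ c₀ : ℝ)
    (ha₀ : 0 < a₀) (hb₀ : 0 < b₀) (hc₀ : 0 < c₀) :
    ∃ C : ℝ, ∀ ζ a b c γ : ℝ, 0 ≤ ζ → ζ < Real.pi / 2 →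
      0 < a → 0 < b → 0 < c →
      Real.cosh c = Real.cosh a * Real.cosh b - Real.sinh a * Real.sinh b * Real.cos γ →
      0 ≤ γ → γ ≤ Real.pi / 2 + ζ →
      a ≤ a₀ → b ≤ b₀ → c₀ ≤ c →
      c - a ≤ C * (b * Real.sin ζ + b ^ 2) := by
  refine ⟨2 * Real.exp (a₀ + b₀) / Real.sinh (c₀ / 2), ?_⟩
  intro ζ a b c γ hζ0 hζπ ha hb hc hlaw hγ0 hγle haa hbb hcc
  have hsc : 0 < Real.sinh (c₀ / 2) := Real.sinh_pos_iff.2 (by linarith)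
  have hC : 0 < 2 * Real.exp (a₀ + b₀) / Real.sinh (c₀ / 2) :=
    div_pos (by positivity) hsc
  have hsinζ : 0 ≤ Real.sin ζ := Real.sin_nonneg_of_nonneg_of_le_pi hζ0
    (by linarith [Real.pi_pos])
  have hRHSfac : 0 ≤ b * Real.sin ζ + b ^ 2 := by positivity
  rcases le_or_gt c a with hca | hca
  · nlinarith
  -- cos γ ≥ -sin ζ
  have hπζ : Real.pi / 2 + ζ ≤ Real.pi := by linarith [Real.pi_pos]
  have hcosval : Real.cos (Real.pi / 2 + ζ) = -Real.sin ζ := by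
    rw [Real.cos_add]; simp
  have hcos : -Real.sin ζ ≤ Real.cos γ := by
    have := Real.cos_le_cos_of_nonneg_of_le_pi hγ0 hπζ hγle
    rwa [hcosval] at this
  -- lower bound: cosh c - cosh a ≥ sinh(c₀/2) * (c - a)
  have hid := cosh_sub_cosh' c a
  have h1 : Real.sinh (c₀ / 2) ≤ Real.sinh ((c + a) / 2) :=
    Real.sinh_le_sinh.2 (by linarith)
  have h2 : (c - a) / 2 ≤ Real.sinh ((c - a) / 2) :=
    Real.self_le_sinh_iff.2 (by linarith)
  have hlow : Real.sinh (c₀ / 2) * (c - a) ≤ Real.cosh c - Real.cosh a := by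
    rw [hid]
    nlinarith [Real.sinh_pos_iff.2 (show (0:ℝ) < (c + a)/2 by linarith)]
  -- upper bound pieces
  have hsa : 0 < Real.sinh a := Real.sinh_pos_iff.2 ha
  have hsb : 0 < Real.sinh b := Real.sinh_pos_iff.2 hb
  have hup1 : Real.cosh c - Real.cosh a ≤
      Real.cosh a * (Real.cosh b - 1) + Real.sinh a * Real.sinh b * Real.sin ζ := by
    have h := mul_nonneg (mul_pos hsa hsb).le
      (show 0 ≤ Real.cos γ + Real.sin ζ by linarith)
    nlinarith
  have hea : Real.cosh a ≤ Real.exp a₀ := by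
    have h := Real.cosh_le_cosh.2 (show |a| ≤ |a₀| by
      rw [abs_of_pos ha, abs_of_pos ha₀]; exact haa)
    have h' : Real.exp (-a₀) ≤ Real.exp a₀ := Real.exp_le_exp.2 (by linarith)
    have he : Real.cosh a₀ = (Real.exp a₀ + Real.exp (-a₀)) / 2 := Real.cosh_eq a₀
    linarith
  have hsa' : Real.sinh a ≤ Real.exp a₀ := by
    have h := Real.sinh_le_sinh.2 haa
    have he : Real.sinh a₀ = (Real.exp a₀ - Real.exp (-a₀)) / 2 := Real.sinh_eq a₀
    have := Real.exp_pos (-a₀)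
    have := Real.exp_pos a₀
    linarith
  -- sinh b ≤ b * exp b₀
  have hsb' : Real.sinh b ≤ b * Real.exp b₀ := by
    refine (sinh_le_mul_exp hb.le).trans ?_
    exact mul_le_mul_of_nonneg_left (Real.exp_le_exp.2 hbb) hb.le
  -- cosh b - 1 ≤ b^2 * exp b₀
  have hcb : Real.cosh b - 1 ≤ b ^ 2 * Real.exp b₀ := by
    have hb2 : Real.cosh b = 1 + 2 * Real.sinh (b / 2) ^ 2 := by
      have hbe : Real.cosh b = Real.cosh (b / 2 + b / 2) := by congr 1; ring
      rw [hbe, Real.cosh_add]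
      linear_combination Real.cosh_sq (b / 2)
    have hs2 : Real.sinh (b / 2) ≤ (b / 2) * Real.exp (b / 2) :=
      sinh_le_mul_exp (by linarith)
    have hs2' : 0 ≤ Real.sinh (b / 2) := Real.sinh_nonneg_iff.2 (by linarith)
    have hsq : Real.sinh (b / 2) ^ 2 ≤ ((b / 2) * Real.exp (b / 2)) ^ 2 := by
      have := pow_le_pow_left₀ hs2' hs2 2
      simpa using this
    have hexp : Real.exp (b / 2) * Real.exp (b / 2) = Real.exp b := by
      rw [← Real.exp_add]; congr 1; ring
    have hee : Real.exp b ≤ Real.exp b₀ := Real.exp_le_exp.2 hbb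
    have hep : (0:ℝ) < Real.exp b := Real.exp_pos b
    nlinarith [sq_nonneg b]
  -- combine
  have h1' : 0 ≤ Real.cosh b - 1 := by linarith [Real.one_le_cosh b]
  have e1 : Real.cosh a * (Real.cosh b - 1) ≤ Real.exp a₀ * (b ^ 2 * Real.exp b₀) :=
    mul_le_mul hea hcb h1' (Real.exp_pos a₀).le
  have e2 : Real.sinh a * Real.sinh b * Real.sin ζ ≤
      Real.exp a₀ * (b * Real.exp b₀) * Real.sin ζ := by
    have := mul_le_mul hsa' hsb' hsb.le (Real.exp_pos a₀).le
    exact mul_le_mul_of_nonneg_right this hsinζ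
  have hexpadd : Real.exp a₀ * Real.exp b₀ = Real.exp (a₀ + b₀) :=
    (Real.exp_add a₀ b₀).symm
  have key : Real.cosh c - Real.cosh a ≤
      2 * Real.exp (a₀ + b₀) * (b * Real.sin ζ + b ^ 2) := by
    nlinarith [Real.exp_pos (a₀ + b₀), mul_nonneg (Real.exp_pos (a₀+b₀)).le hRHSfac,
      mul_nonneg (Real.exp_pos (a₀+b₀)).le (mul_nonneg hb.le hsinζ),
      mul_nonneg (Real.exp_pos (a₀+b₀)).le (sq_nonneg b)]
  rw [div_mul_eq_mul_div, le_div_iff₀ hsc]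
  nlinarith [hlow, key]
end

section
/- If φ₁, φ₂ ∈ (0, π/2] satisfy φ₁ + φ₂ ≤ π/2, and L₁ ≥ arcsinh(cot(φ₁)) and L₂ ≥ arcsinh(cot(φ₂)), then L₁ + L₂ ≥ 2·arcsinh(1). -/
open Real in
lemma key_arsinh_sum {t : ℝ} (ht : 0 < t) :
    2 * arsinh 1 ≤ arsinh t + arsinh t⁻¹ := by
  rw [← Real.sinh_le_sinh, Real.sinh_add]
  have h2 : Real.sinh (2 * arsinh 1) = 2 * Real.sinh (arsinh 1) * Real.cosh (arsinh 1) := by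
    rw [two_mul, Real.sinh_add]; ring
  rw [h2, Real.sinh_arsinh, Real.cosh_arsinh, Real.sinh_arsinh, Real.sinh_arsinh,
    Real.cosh_arsinh, Real.cosh_arsinh]
  have hs : √(1 + (t⁻¹) ^ 2) = √(1 + t ^ 2) / t := by
    rw [show (1 : ℝ) + (t⁻¹) ^ 2 = (1 + t ^ 2) / t ^ 2 by field_simp; ring,
      Real.sqrt_div (by positivity), Real.sqrt_sq ht.le]
  rw [hs]
  set s := √(1 + t ^ 2) with hsdef
  have hs0 : 0 ≤ s := Real.sqrt_nonneg _
  have hssq : s ^ 2 = 1 + t ^ 2 := Real.sq_sqrt (by positivity)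
  have hr0 : (0:ℝ) ≤ √(1 + 1 ^ 2) := Real.sqrt_nonneg _
  have hrsq : √(1 + 1 ^ 2) ^ 2 = 2 := by
    rw [Real.sq_sqrt]; norm_num; norm_num
  -- goal: 2 * 1 * √(1+1^2) ≤ t * (s / t) + s * t⁻¹
  have hgoal : 2 * √(1 + 1 ^ 2) * t ≤ s * (t + 1) := by
    nlinarith [sq_nonneg (s * (t + 1) - 2 * √(1 + 1 ^ 2) * t), sq_nonneg (t - 1),
      mul_pos ht ht, sq_nonneg (s*(t+1)), mul_nonneg hs0 (by linarith : (0:ℝ) ≤ t + 1),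
      mul_pos (mul_pos (by norm_num : (0:ℝ) < 2) ht) ht]
  have : t * (s / t) + s * t⁻¹ = s * (t + 1) / t := by field_simp
  rw [this, le_div_iff₀ ht]
  nlinarith [hgoal]

theorem sum_ge_two_arsinh_one (φ₁ φ₂ L₁ L₂ : ℝ)
    (h₁ : φ₁ ∈ Set.Ioc 0 (Real.pi / 2)) (h₂ : φ₂ ∈ Set.Ioc 0 (Real.pi / 2))
    (hsum : φ₁ + φ₂ ≤ Real.pi / 2)
    (hL₁ : Real.arsinh (Real.cot φ₁) ≤ L₁) (hL₂ : Real.arsinh (Real.cot φ₂) ≤ L₂) :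
    2 * Real.arsinh 1 ≤ L₁ + L₂ := by
  obtain ⟨hφ₁0, hφ₁2⟩ := h₁
  obtain ⟨hφ₂0, hφ₂2⟩ := h₂
  have hφ₁lt : φ₁ < Real.pi / 2 := by linarith
  have hφ₂lt : φ₂ < Real.pi / 2 := by linarith
  have hsin₁ : 0 < Real.sin φ₁ := Real.sin_pos_of_pos_of_lt_pi hφ₁0 (by linarith [Real.pi_pos])
  have hsin₂ : 0 < Real.sin φ₂ := Real.sin_pos_of_pos_of_lt_pi hφ₂0 (by linarith [Real.pi_pos])
  have hcos₁ : 0 < Real.cos φ₁ := Real.cos_pos_of_mem_Ioo ⟨by linarith [Real.pi_pos], hφ₁lt⟩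
  have hcos₂ : 0 < Real.cos φ₂ := Real.cos_pos_of_mem_Ioo ⟨by linarith [Real.pi_pos], hφ₂lt⟩
  have htan₁ : 0 < Real.tan φ₁ := Real.tan_pos_of_pos_of_lt_pi_div_two hφ₁0 hφ₁lt
  have htan₂ : 0 < Real.tan φ₂ := Real.tan_pos_of_pos_of_lt_pi_div_two hφ₂0 hφ₂lt
  have hcot₁ : Real.cot φ₁ = (Real.tan φ₁)⁻¹ := by
    rw [Real.cot_eq_cos_div_sin, Real.tan_eq_sin_div_cos]; field_simp
  have hcot₂ : Real.cot φ₂ = (Real.tan φ₂)⁻¹ := by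
    rw [Real.cot_eq_cos_div_sin, Real.tan_eq_sin_div_cos]; field_simp
  -- tan φ₂ ≤ tan (π/2 - φ₁) = (tan φ₁)⁻¹
  have hmono : Real.tan φ₂ ≤ (Real.tan φ₁)⁻¹ := by
    rw [← Real.tan_pi_div_two_sub]
    rcases eq_or_lt_of_le (by linarith : φ₂ ≤ Real.pi / 2 - φ₁) with h | h
    · rw [h]
    · exact (Real.tan_lt_tan_of_lt_of_lt_pi_div_two (by linarith) (by linarith) h).le
  have hkey : Real.cot φ₂ ≥ Real.tan φ₁ := by
    rw [hcot₂]
    exact (le_inv_comm₀ htan₁ htan₂).mpr hmono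
  have h1 : Real.arsinh (Real.tan φ₁) ≤ Real.arsinh (Real.cot φ₂) :=
    Real.arsinh_le_arsinh.2 hkey
  have h2 := key_arsinh_sum (t := Real.cot φ₁) (by rw [hcot₁]; positivity)
  have h3 : (Real.cot φ₁)⁻¹ = Real.tan φ₁ := by rw [hcot₁, inv_inv]
  rw [h3] at h2
  linarith
end

section
/- For a smooth metric ds² = dr² + G(r,θ)² dθ² (Fermi coordinates) with Gauss curvature satisfying |K| ≤ κ², the coefficient satisfies cos(κ r) ≤ G(r,θ) ≤ cosh(κ r) for all r in the domain (with κ r < π/2 for the lower bound). -/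
/-!
Sturm comparison. If `u > 0` and the Wronskian `W = f' u - f u'` vanishes at `0` while
`W' = f'' u - f u'' ≤ 0`, then `W ≤ 0`, so `(f / u)' = W / u² ≤ 0` and `f / u ≤ f 0 / u 0`.
With `f = g`, `u = cosh (κ ·)` the hypothesis `g'' ≤ κ² g` gives `g ≤ cosh (κ r)`; with
`f = cos (κ ·)`, `u = g` the hypothesis `g'' ≥ -κ² g` together with `cos (κ r) ≥ 0` gives
`cos (κ r) ≤ g`.
-/

open Set Real

lemma antitoneOn_Icc_of_hasDerivAt_nonpos {φ φ' : ℝ → ℝ} {a b : ℝ}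
    (hφ : ∀ x ∈ Icc a b, HasDerivAt φ (φ' x) x) (hφ' : ∀ x ∈ Icc a b, φ' x ≤ 0) :
    AntitoneOn φ (Icc a b) := by
  refine antitoneOn_of_hasDerivWithinAt_nonpos (f' := φ') (convex_Icc a b)
    (fun x hx ↦ (hφ x hx).continuousAt.continuousWithinAt) (fun x hx ↦ ?_) (fun x hx ↦ ?_)
  all_goals rw [interior_Icc] at hx
  · exact (hφ x (Ioo_subset_Icc_self hx)).hasDerivWithinAt
  · exact hφ' x (Ioo_subset_Icc_self hx)

section Wronskian

variable {f f' f'' u u' u'' : ℝ → ℝ} {a b : ℝ}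

lemma wronskian_nonpos_of_deriv_nonpos
    (hf' : ∀ x ∈ Icc a b, HasDerivAt f (f' x) x) (hf'' : ∀ x ∈ Icc a b, HasDerivAt f' (f'' x) x)
    (hu' : ∀ x ∈ Icc a b, HasDerivAt u (u' x) x) (hu'' : ∀ x ∈ Icc a b, HasDerivAt u' (u'' x) x)
    (ha : f' a * u a - f a * u' a ≤ 0) (hW' : ∀ x ∈ Icc a b, f'' x * u x - f x * u'' x ≤ 0) :
    ∀ x ∈ Icc a b, f' x * u x - f x * u' x ≤ 0 := by
  have hW : ∀ x ∈ Icc a b, HasDerivAt (fun y ↦ f' y * u y - f y * u' y)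
      (f'' x * u x - f x * u'' x) x := fun x hx ↦
    (((hf'' x hx).mul (hu' x hx)).sub ((hf' x hx).mul (hu'' x hx))).congr_deriv (by ring)
  intro x hx
  exact (antitoneOn_Icc_of_hasDerivAt_nonpos hW hW' ⟨le_rfl, hx.1.trans hx.2⟩ hx hx.1).trans ha

lemma antitoneOn_div_of_wronskian_nonpos
    (hf' : ∀ x ∈ Icc a b, HasDerivAt f (f' x) x) (hu' : ∀ x ∈ Icc a b, HasDerivAt u (u' x) x)
    (hu : ∀ x ∈ Icc a b, 0 < u x) (hW : ∀ x ∈ Icc a b, f' x * u x - f x * u' x ≤ 0) :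
    AntitoneOn (fun x ↦ f x / u x) (Icc a b) :=
  antitoneOn_Icc_of_hasDerivAt_nonpos (fun x hx ↦ (hf' x hx).div (hu' x hx) (hu x hx).ne')
    fun x hx ↦ div_nonpos_of_nonpos_of_nonneg (hW x hx) (sq_nonneg _)

theorem div_le_div_of_wronskian_deriv_nonpos
    (hf' : ∀ x ∈ Icc a b, HasDerivAt f (f' x) x) (hf'' : ∀ x ∈ Icc a b, HasDerivAt f' (f'' x) x)
    (hu' : ∀ x ∈ Icc a b, HasDerivAt u (u' x) x) (hu'' : ∀ x ∈ Icc a b, HasDerivAt u' (u'' x) x)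
    (hu : ∀ x ∈ Icc a b, 0 < u x) (ha : f' a * u a - f a * u' a ≤ 0)
    (hW' : ∀ x ∈ Icc a b, f'' x * u x - f x * u'' x ≤ 0) :
    ∀ x ∈ Icc a b, f x / u x ≤ f a / u a := fun _ hx ↦
  antitoneOn_div_of_wronskian_nonpos hf' hu' hu
    (wronskian_nonpos_of_deriv_nonpos hf' hf'' hu' hu'' ha hW') ⟨le_rfl, hx.1.trans hx.2⟩ hx hx.1

end Wronskian

lemma hasDerivAt_cosh_mul (κ x : ℝ) :
    HasDerivAt (fun y ↦ cosh (κ * y)) (κ * sinh (κ * x)) x :=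
  (((hasDerivAt_id x).const_mul κ).cosh).congr_deriv (by simp only [id, mul_one]; ring)

lemma hasDerivAt_mul_sinh_mul (κ x : ℝ) :
    HasDerivAt (fun y ↦ κ * sinh (κ * y)) (κ ^ 2 * cosh (κ * x)) x :=
  ((((hasDerivAt_id x).const_mul κ).sinh).const_mul κ).congr_deriv
    (by simp only [id, mul_one]; ring)

lemma hasDerivAt_cos_mul (κ x : ℝ) :
    HasDerivAt (fun y ↦ cos (κ * y)) (-(κ * sin (κ * x))) x :=
  (((hasDerivAt_id x).const_mul κ).cos).congr_deriv (by simp only [id, mul_one]; ring)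

lemma hasDerivAt_neg_mul_sin_mul (κ x : ℝ) :
    HasDerivAt (fun y ↦ -(κ * sin (κ * y))) (-(κ ^ 2 * cos (κ * x))) x :=
  ((((hasDerivAt_id x).const_mul κ).sin).const_mul κ).fun_neg.congr_deriv
    (by simp only [id, mul_one]; ring)

section Comparison

variable {κ R : ℝ} {g g' g'' : ℝ → ℝ}

theorem le_cosh_of_deriv2_le
    (hg' : ∀ r ∈ Icc 0 R, HasDerivAt g (g' r) r) (hg'' : ∀ r ∈ Icc 0 R, HasDerivAt g' (g'' r) r)
    (h0 : g 0 = 1) (h0' : g' 0 = 0) (hle : ∀ r ∈ Icc 0 R, g'' r ≤ κ ^ 2 * g r) :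
    ∀ r ∈ Icc 0 R, g r ≤ cosh (κ * r) := by
  intro r hr
  have hratio := div_le_div_of_wronskian_deriv_nonpos hg' hg'' (fun x _ ↦ hasDerivAt_cosh_mul κ x)
    (fun x _ ↦ hasDerivAt_mul_sinh_mul κ x) (fun _ _ ↦ cosh_pos _) (by simp [h0, h0'])
    (fun x hx ↦ by nlinarith [hle x hx, cosh_pos (κ * x)]) r hr
  simpa [h0, div_le_one (cosh_pos (κ * r))] using hratio

theorem cos_le_of_neg_le_deriv2 (hκ : 0 ≤ κ) (hκR : κ * R < π / 2)
    (hg' : ∀ r ∈ Icc 0 R, HasDerivAt g (g' r) r) (hg'' : ∀ r ∈ Icc 0 R, HasDerivAt g' (g'' r) r)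
    (h0 : g 0 = 1) (h0' : g' 0 = 0) (hpos : ∀ r ∈ Icc 0 R, 0 < g r)
    (hle : ∀ r ∈ Icc 0 R, -(κ ^ 2 * g r) ≤ g'' r) :
    ∀ r ∈ Icc 0 R, cos (κ * r) ≤ g r := by
  have hcos : ∀ r ∈ Icc 0 R, 0 ≤ cos (κ * r) := fun r hr ↦
    cos_nonneg_of_mem_Icc ⟨by nlinarith [pi_pos, hr.1], by nlinarith [hr.2]⟩
  intro r hr
  have hratio := div_le_div_of_wronskian_deriv_nonpos (fun x _ ↦ hasDerivAt_cos_mul κ x)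
    (fun x _ ↦ hasDerivAt_neg_mul_sin_mul κ x) hg' hg'' hpos (by simp [h0'])
    (fun x hx ↦ by nlinarith [hle x hx, hcos x hx]) r hr
  simpa [h0, div_le_one (hpos r hr)] using hratio

end Comparison

theorem fermi_coefficient_bounds_general (κ R : ℝ) (hκ : 0 ≤ κ)
    (hκR : κ * R < Real.pi / 2) (g g' g'' : ℝ → ℝ)
    (hg' : ∀ r ∈ Set.Icc 0 R, HasDerivAt g (g' r) r)
    (hg'' : ∀ r ∈ Set.Icc 0 R, HasDerivAt g' (g'' r) r)
    (h0 : g 0 = 1) (h0' : g' 0 = 0)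
    (hcurv : ∀ r ∈ Set.Icc 0 R, |g'' r| ≤ κ ^ 2 * |g r|)
    (hpos : ∀ r ∈ Set.Icc 0 R, 0 < g r) :
    ∀ r ∈ Set.Icc 0 R, Real.cos (κ * r) ≤ g r ∧ g r ≤ Real.cosh (κ * r) := by
  have hbound : ∀ r ∈ Icc 0 R, -(κ ^ 2 * g r) ≤ g'' r ∧ g'' r ≤ κ ^ 2 * g r := fun r hr ↦
    abs_le.mp (abs_of_pos (hpos r hr) ▸ hcurv r hr)
  intro r hr
  exact ⟨cos_le_of_neg_le_deriv2 hκ hκR hg' hg'' h0 h0' hpos (fun x hx ↦ (hbound x hx).1) r hr,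
    le_cosh_of_deriv2_le hg' hg'' h0 h0' (fun x hx ↦ (hbound x hx).2) r hr⟩

/-- ODE comparison for the metric coefficient in Fermi coordinates: if `g` is `C²`
with `g 0 = 1`, `g' 0 = 0`, `|g''| ≤ κ² |g|` and `g > 0` on `[0, R]`, with
`κ R < π/2`, then `cos (κ r) ≤ g r ≤ cosh (κ r)` on `[0, R]`. -/
theorem fermi_coefficient_bounds (κ R : ℝ) (hκ : 0 ≤ κ) (hR : 0 ≤ R)
    (hκR : κ * R < Real.pi / 2) (g g' g'' : ℝ → ℝ)
    (hg' : ∀ r ∈ Set.Icc 0 R, HasDerivAt g (g' r) r)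
    (hg'' : ∀ r ∈ Set.Icc 0 R, HasDerivAt g' (g'' r) r)
    (h0 : g 0 = 1) (h0' : g' 0 = 0)
    (hcurv : ∀ r ∈ Set.Icc 0 R, |g'' r| ≤ κ ^ 2 * |g r|)
    (hpos : ∀ r ∈ Set.Icc 0 R, 0 < g r) :
    ∀ r ∈ Set.Icc 0 R, Real.cos (κ * r) ≤ g r ∧ g r ≤ Real.cosh (κ * r) :=
  fermi_coefficient_bounds_general κ R hκ hκR g g' g'' hg' hg'' h0 h0' hcurv hpos
end
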